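/- Let B_{k,i}(n) be the basis solutions of the k-generalized Fibonacci recurrence with B_{k,i}(n) = δ_{in} for 0 ≤ n ≤ k-1, and let F_k = B_{k,k-1}. Then for 0 ≤ i ≤ k-2 and all n ≥ k, B_{k,i}(n) = ∑_{s=0}^{i} F_k(n-s-1). -/

import Mathlib

/-!
The shift relations `B 0 n = F (n - 1)` and `B (i + 1) n = B i (n - 1) + F (n - 1)` for `n ≥ 1`
telescope to the claimed sum. Each shift relation holds because both of its sides satisfy the
recurrence from `n = k + 1` on and agree on the window `1 ≤ n ≤ k`, where everything is an
initial value except `B i k = 1 = F (k - 1)`.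
-/

open Finset

/-- The order-`k` recurrence holds beyond the initial window `[m, m + k)`. -/
def IsKBonacciFrom {M : Type*} [AddCommMonoid M] (k m : ℕ) (u : ℕ → M) : Prop :=
  ∀ n, m + k ≤ n → u n = ∑ j ∈ range k, u (n - (j + 1))

namespace IsKBonacciFrom

variable {M : Type*} [AddCommMonoid M] {k m : ℕ} {u v : ℕ → M}

theorem mono (hu : IsKBonacciFrom k m u) {m' : ℕ} (hm : m ≤ m') : IsKBonacciFrom k m' u :=
  fun n hn => hu n (by omega)

theorem zero : IsKBonacciFrom k m (0 : ℕ → M) := fun _ _ => by simp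

theorem add (hu : IsKBonacciFrom k m u) (hv : IsKBonacciFrom k m v) :
    IsKBonacciFrom k m (u + v) := fun n hn => by
  simp only [Pi.add_apply, hu n hn, hv n hn, sum_add_distrib]

theorem shift (hu : IsKBonacciFrom k m u) : IsKBonacciFrom k (m + 1) (fun n => u (n - 1)) :=
  fun n hn => by
    show u (n - 1) = ∑ j ∈ range k, u (n - (j + 1) - 1)
    rw [hu (n - 1) (by omega)]
    exact sum_congr rfl fun j _ => by rw [Nat.sub_right_comm]

theorem eq_of_eqOn_window (hu : IsKBonacciFrom k m u) (hv : IsKBonacciFrom k m v)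
    (hwin : ∀ n, m ≤ n → n < m + k → u n = v n) : ∀ n, m ≤ n → u n = v n := by
  intro n
  induction n using Nat.strong_induction_on with
  | _ n ih =>
    intro hmn
    by_cases hn : n < m + k
    · exact hwin n hmn hn
    · rw [hu n (by omega), hv n (by omega)]
      refine sum_congr rfl fun j hj => ih _ ?_ ?_ <;> simp only [mem_range] at hj <;> omega

theorem eq_shift_add_shift {p q : ℕ → M} (hu : IsKBonacciFrom k 0 u)
    (hp : IsKBonacciFrom k 0 p) (hq : IsKBonacciFrom k 0 q)
    (hwin : ∀ n, 1 ≤ n → n ≤ k → u n = p (n - 1) + q (n - 1)) :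
    ∀ n, 1 ≤ n → u n = p (n - 1) + q (n - 1) :=
  eq_of_eqOn_window (hu.mono zero_le_one) (hp.shift.add hq.shift)
    fun n h1 h2 => hwin n h1 (by omega)

end IsKBonacciFrom

section Basis

variable {k : ℕ} {B : Fin k → ℕ → ℤ}

theorem basis_isKBonacciFrom
    (hrec : ∀ (i : Fin k) (n : ℕ), k ≤ n → B i n = ∑ j ∈ range k, B i (n - (j + 1)))
    (i : Fin k) : IsKBonacciFrom k 0 (B i) :=
  fun n hn => hrec i n (by omega)

theorem basis_apply_k
    (hinit : ∀ (i : Fin k) (n : ℕ), n < k → B i n = if (i : ℕ) = n then 1 else 0)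
    (hrec : ∀ (i : Fin k) (n : ℕ), k ≤ n → B i n = ∑ j ∈ range k, B i (n - (j + 1)))
    (i : Fin k) : B i k = 1 := by
  calc B i k = ∑ j ∈ range k, B i (k - 1 - j) :=
        hrec i k le_rfl ▸ sum_congr rfl fun j _ => by rw [Nat.sub_sub, Nat.add_comm]
    _ = ∑ j ∈ range k, B i j := sum_range_reflect (B i) k
    _ = ∑ j ∈ range k, if (i : ℕ) = j then 1 else 0 :=
        sum_congr rfl fun j hj => hinit i j (mem_range.mp hj)
    _ = 1 := by simp

theorem basis_zero_eq_shift_last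
    (hinit : ∀ (i : Fin k) (n : ℕ), n < k → B i n = if (i : ℕ) = n then 1 else 0)
    (hrec : ∀ (i : Fin k) (n : ℕ), k ≤ n → B i n = ∑ j ∈ range k, B i (n - (j + 1)))
    (hk : 0 < k) (n : ℕ) (hn : 1 ≤ n) :
    B ⟨0, hk⟩ n = B ⟨k - 1, by omega⟩ (n - 1) := by
  rw [← zero_add (B _ (n - 1))]
  refine IsKBonacciFrom.eq_shift_add_shift (p := 0) (basis_isKBonacciFrom hrec _)
    IsKBonacciFrom.zero (basis_isKBonacciFrom hrec _) ?_ n hn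
  intro m hm1 hmk
  rcases hmk.lt_or_eq with hmk | rfl
  · simp [hinit _ m hmk, hinit _ (m - 1) (by omega), show k - 1 ≠ m - 1 by omega]
    omega
  · simp [basis_apply_k hinit hrec, hinit _ (m - 1) (by omega)]

theorem basis_succ_eq_shift_add_shift_last
    (hinit : ∀ (i : Fin k) (n : ℕ), n < k → B i n = if (i : ℕ) = n then 1 else 0)
    (hrec : ∀ (i : Fin k) (n : ℕ), k ≤ n → B i n = ∑ j ∈ range k, B i (n - (j + 1)))
    (i : ℕ) (hi : i + 1 < k) (n : ℕ) (hn : 1 ≤ n) :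
    B ⟨i + 1, hi⟩ n = B ⟨i, by omega⟩ (n - 1) + B ⟨k - 1, by omega⟩ (n - 1) := by
  refine IsKBonacciFrom.eq_shift_add_shift (basis_isKBonacciFrom hrec _)
    (basis_isKBonacciFrom hrec _) (basis_isKBonacciFrom hrec _) ?_ n hn
  intro m hm1 hmk
  rcases hmk.lt_or_eq with hmk | rfl
  · simp [hinit _ m hmk, hinit _ (m - 1) (by omega), show k - 1 ≠ m - 1 by omega]
    omega
  · simp [basis_apply_k hinit hrec, hinit _ (m - 1) (by omega), show i ≠ m - 1 by omega]

theorem basis_eq_sum_shift_last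
    (hinit : ∀ (i : Fin k) (n : ℕ), n < k → B i n = if (i : ℕ) = n then 1 else 0)
    (hrec : ∀ (i : Fin k) (n : ℕ), k ≤ n → B i n = ∑ j ∈ range k, B i (n - (j + 1)))
    (i : ℕ) (hi : i < k) (n : ℕ) (hn : i + 1 ≤ n) :
    B ⟨i, hi⟩ n = ∑ s ∈ range (i + 1), B ⟨k - 1, by omega⟩ (n - s - 1) := by
  induction i generalizing n with
  | zero => simpa using basis_zero_eq_shift_last hinit hrec hi n hn
  | succ i ih =>
    rw [basis_succ_eq_shift_add_shift_last hinit hrec i hi n (by omega),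
      ih (by omega) (n - 1) (by omega), sum_range_succ' _ (i + 1)]
    congr 1
    exact sum_congr rfl fun s _ => by congr 1; omega

end Basis

theorem stmt_15 (k : ℕ) (hk : 2 ≤ k)
    (B : Fin k → ℕ → ℤ)
    (hinit : ∀ (i : Fin k) (n : ℕ), n < k → B i n = if (i : ℕ) = n then 1 else 0)
    (hrec : ∀ (i : Fin k) (n : ℕ), k ≤ n → B i n = ∑ j ∈ range k, B i (n - (j + 1)))
    (i : Fin k) (n : ℕ) (hn : k ≤ n) :
    B i n = ∑ s ∈ range ((i : ℕ) + 1), B ⟨k - 1, by omega⟩ (n - s - 1) :=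
  basis_eq_sum_shift_last hinit hrec i i.2 n (by omega)
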